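/- arXiv:1804.00468 — 2 statements merged into one kernel-verified Lean document; each statement's English description precedes it below -/
import Mathlib

section
/- For fixed 1 < p < ∞, the limit lim_{q→p⁺} (p'/q)^{1/q} ((p/(q-p)) · B(p/(q-p), pq/(q'(q-p))))^{1/q - 1/p} = p/(p-1) holds, where p' = p/(p-1), q' = q/(q-1), and B is the Euler Beta function. -/
/-!
Write `ε = q - p`. The second factor is `exp (-(1 / (p q)) · ε log (p/ε · B(u, v)))` with
`ε u = p` and `ε v = p (q - 1)`, so everything hinges on a Laplace-type estimate for
`ε log B(u, v)` as `u, v → ∞`. The integrand `t^(u-1) (1-t)^(v-1)` has maximum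
`M(u', v') = (u'/(u'+v'))^u' (v'/(u'+v'))^v'` (`u' = u - 1`, `v' = v - 1`), and by Bernoulli's
inequality it stays above `M/2` on an interval of length `1/(2(u'+v'))` left of its peak, whence
`M/(4(u'+v')) ≤ B(u, v) ≤ M`. The factor `4(u'+v')` is only `O(1/ε)`, and `ε log M(u', v')` equals
`log M(ε u', ε v') → log M(p, p (p - 1))`, which makes the product tend to `p/(p-1)`.
-/

open MeasureTheory Set Filter
open scoped ENNReal Topology

/-- The Euler Beta function `B(z,w) = ∫₀¹ t^(z-1) (1-t)^(w-1) dt`. -/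
noncomputable def betaFn (z w : ℝ) : ℝ :=
  ∫ t in Ioo (0 : ℝ) 1, t ^ (z - 1) * (1 - t) ^ (w - 1)

open Real

noncomputable def betaIntegrandMax (u v : ℝ) : ℝ := (u / (u + v)) ^ u * (v / (u + v)) ^ v

section
variable {u v : ℝ}

lemma betaFn_add_one (u v : ℝ) :
    betaFn (u + 1) (v + 1) = ∫ t in Ioo (0 : ℝ) 1, t ^ u * (1 - t) ^ v := by
  simp only [betaFn, add_sub_cancel_right]

lemma betaIntegrandMax_pos (hu : 0 < u) (hv : 0 < v) : 0 < betaIntegrandMax u v := by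
  unfold betaIntegrandMax; positivity

lemma log_betaIntegrandMax (hu : 0 < u) (hv : 0 < v) :
    log (betaIntegrandMax u v) = u * log (u / (u + v)) + v * log (v / (u + v)) := by
  have hs : 0 < u + v := add_pos hu hv
  rw [betaIntegrandMax, log_mul (by positivity) (by positivity), log_rpow (by positivity),
    log_rpow (by positivity)]

lemma rpow_mul_one_sub_rpow_pos {t : ℝ} (ht : t ∈ Ioo (0 : ℝ) 1) : 0 < t ^ u * (1 - t) ^ v :=
  mul_pos (rpow_pos_of_pos ht.1 u) (rpow_pos_of_pos (sub_pos.2 ht.2) v)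

lemma rpow_mul_one_sub_rpow_le_betaIntegrandMax (hu : 0 < u) (hv : 0 < v) {t : ℝ}
    (ht : t ∈ Ioo (0 : ℝ) 1) : t ^ u * (1 - t) ^ v ≤ betaIntegrandMax u v := by
  have hs : 0 < u + v := add_pos hu hv
  have ht' : 0 < 1 - t := sub_pos.2 ht.2
  rw [← log_le_log_iff (rpow_mul_one_sub_rpow_pos ht) (betaIntegrandMax_pos hu hv),
    log_betaIntegrandMax hu hv, log_mul (rpow_pos_of_pos ht.1 u).ne' (rpow_pos_of_pos ht' v).ne',
    log_rpow ht.1, log_rpow ht']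
  -- `log x ≤ x - 1` at `x = t / (u / (u + v))` and `x = (1 - t) / (v / (u + v))`
  have h₁ := log_le_sub_one_of_pos (div_pos ht.1 (div_pos hu hs))
  have h₂ := log_le_sub_one_of_pos (div_pos ht' (div_pos hv hs))
  rw [log_div ht.1.ne' (by positivity)] at h₁
  rw [log_div ht'.ne' (by positivity)] at h₂
  have hsum : u * (t / (u / (u + v)) - 1) + v * ((1 - t) / (v / (u + v)) - 1) = 0 := by
    field_simp; ring
  nlinarith [mul_le_mul_of_nonneg_left h₁ hu.le, mul_le_mul_of_nonneg_left h₂ hv.le]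

lemma integrableOn_rpow_mul_one_sub_rpow (hu : 0 < u) (hv : 0 < v) :
    IntegrableOn (fun t : ℝ => t ^ u * (1 - t) ^ v) (Ioo 0 1) := by
  refine Measure.integrableOn_of_bounded (M := betaIntegrandMax u v) (by simp)
    (by fun_prop) ?_
  filter_upwards [ae_restrict_mem measurableSet_Ioo] with t ht
  rw [norm_of_nonneg (rpow_mul_one_sub_rpow_pos ht).le]
  exact rpow_mul_one_sub_rpow_le_betaIntegrandMax hu hv ht

lemma betaFn_add_one_le (hu : 0 < u) (hv : 0 < v) :
    betaFn (u + 1) (v + 1) ≤ betaIntegrandMax u v := by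
  rw [betaFn_add_one]
  calc ∫ t in Ioo (0 : ℝ) 1, t ^ u * (1 - t) ^ v
      ≤ ∫ _ in Ioo (0 : ℝ) 1, betaIntegrandMax u v :=
        setIntegral_mono_on (integrableOn_rpow_mul_one_sub_rpow hu hv)
          (integrableOn_const (by simp)) measurableSet_Ioo
          fun t ht => rpow_mul_one_sub_rpow_le_betaIntegrandMax hu hv ht
    _ = betaIntegrandMax u v := by simp

lemma betaIntegrandMax_div_two_le (hu : 1 ≤ u) (hv : 0 < v) {t : ℝ}
    (ht : t ∈ Ioc (u / (u + v) - 1 / (2 * (u + v))) (u / (u + v))) :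
    betaIntegrandMax u v / 2 ≤ t ^ u * (1 - t) ^ v := by
  set w := u / (u + v) with hw
  set a := w - 1 / (2 * (u + v)) with ha
  have hc : 0 < 1 + -(1 / (2 * u)) := by
    rw [← sub_eq_add_neg, sub_pos, div_lt_one (by linarith)]; linarith
  have ha_eq : a = w * (1 + -(1 / (2 * u))) := by rw [ha, hw]; field_simp; ring
  have ha0 : 0 < a := by rw [ha_eq]; positivity
  -- Bernoulli: `(1 - 1/(2u))^u ≥ 1/2`, so `t^u` loses at most a factor `2` on `(a, w]`
  have hbern : w ^ u / 2 ≤ a ^ u := by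
    have hb := one_add_mul_self_le_rpow_one_add
      (s := -(1 / (2 * u))) (by rw [neg_le, neg_neg, div_le_one (by linarith)]; linarith) hu
    rw [show 1 + u * -(1 / (2 * u)) = 1 / 2 by field_simp; ring] at hb
    rw [ha_eq, mul_rpow (by positivity) hc.le]
    nlinarith [rpow_nonneg (show 0 ≤ w by positivity) u]
  have h1w : 1 - w = v / (u + v) := by rw [hw]; field_simp; ring
  have hau : a ^ u ≤ t ^ u := rpow_le_rpow ha0.le ht.1.le (by linarith)
  have hvt : (v / (u + v)) ^ v ≤ (1 - t) ^ v :=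
    rpow_le_rpow (by positivity) (by linarith [ht.2]) hv.le
  rw [betaIntegrandMax, ← hw]
  have hv' := rpow_nonneg (show 0 ≤ v / (u + v) by positivity) v
  nlinarith [mul_le_mul hau hvt hv' (rpow_nonneg (ha0.trans ht.1).le u)]

lemma betaIntegrandMax_div_le_betaFn_add_one (hu : 1 ≤ u) (hv : 0 < v) :
    betaIntegrandMax u v / (4 * (u + v)) ≤ betaFn (u + 1) (v + 1) := by
  have hu0 : 0 < u := by linarith
  have hs : 0 < u + v := by linarith
  set w := u / (u + v) with hw
  set a := w - 1 / (2 * (u + v)) with ha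
  have hδ : 0 < 1 / (2 * (u + v)) := by positivity
  have ha0 : 0 < a := by
    rw [ha, hw, sub_pos, div_lt_div_iff₀ (by positivity) hs]; nlinarith
  have hI : Ioc a w ⊆ Ioo 0 1 :=
    fun t ht => ⟨ha0.trans ht.1, ht.2.trans_lt ((div_lt_one hs).2 (by linarith))⟩
  calc betaIntegrandMax u v / (4 * (u + v))
      = betaIntegrandMax u v / 2 * volume.real (Ioc a w) := by
        rw [volume_real_Ioc_of_le (by rw [ha]; linarith), ha]
        field_simp
        ring
    _ ≤ ∫ t in Ioc a w, t ^ u * (1 - t) ^ v :=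
        setIntegral_ge_of_const_le_real measurableSet_Ioc (by simp)
          (fun t ht => betaIntegrandMax_div_two_le hu hv ht)
          ((integrableOn_rpow_mul_one_sub_rpow hu0 hv).mono_set hI)
    _ ≤ ∫ t in Ioo (0 : ℝ) 1, t ^ u * (1 - t) ^ v := by
        refine setIntegral_mono_set (integrableOn_rpow_mul_one_sub_rpow hu0 hv) ?_ hI.eventuallyLE
        filter_upwards [ae_restrict_mem measurableSet_Ioo] with t ht
        exact (rpow_mul_one_sub_rpow_pos ht).le
    _ = betaFn (u + 1) (v + 1) := (betaFn_add_one u v).symm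

lemma betaFn_add_one_pos (hu : 1 ≤ u) (hv : 0 < v) : 0 < betaFn (u + 1) (v + 1) :=
  (div_pos (betaIntegrandMax_pos (by linarith) hv) (by linarith)).trans_le
    (betaIntegrandMax_div_le_betaFn_add_one hu hv)

lemma mul_log_betaIntegrandMax {ε : ℝ} (hε : 0 < ε) (hu : 0 < u) (hv : 0 < v) :
    ε * log (betaIntegrandMax u v) = log (betaIntegrandMax (ε * u) (ε * v)) := by
  rw [log_betaIntegrandMax hu hv, log_betaIntegrandMax (mul_pos hε hu) (mul_pos hε hv), ← mul_add,
    mul_div_mul_left _ _ hε.ne', mul_div_mul_left _ _ hε.ne']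
  ring

lemma mul_log_betaFn_add_one_le {ε : ℝ} (hε : 0 < ε) (hu : 1 ≤ u) (hv : 0 < v) :
    ε * log (betaFn (u + 1) (v + 1)) ≤ log (betaIntegrandMax (ε * u) (ε * v)) := by
  have hu₀ : 0 < u := by linarith
  rw [← mul_log_betaIntegrandMax hε hu₀ hv]
  exact mul_le_mul_of_nonneg_left
    (log_le_log (betaFn_add_one_pos hu hv) (betaFn_add_one_le hu₀ hv)) hε.le

lemma log_betaIntegrandMax_sub_le_mul_log_betaFn_add_one {ε : ℝ} (hε : 0 < ε) (hu : 1 ≤ u)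
    (hv : 0 < v) :
    log (betaIntegrandMax (ε * u) (ε * v)) - ε * log (4 * (u + v))
      ≤ ε * log (betaFn (u + 1) (v + 1)) := by
  have hu₀ : 0 < u := by linarith
  have hM := betaIntegrandMax_pos hu₀ hv
  rw [← mul_log_betaIntegrandMax hε hu₀ hv, ← mul_sub, ← log_div hM.ne' (by positivity)]
  exact mul_le_mul_of_nonneg_left
    (log_le_log (by positivity) (betaIntegrandMax_div_le_betaFn_add_one hu hv)) hε.le

end

section
variable {ι : Type*} {l : Filter ι} {ε u v : ι → ℝ} {α β : ℝ}

lemma tendsto_atTop_of_tendsto_mul (hα : 0 < α) (hε : Tendsto ε l (𝓝[>] 0))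
    (hu : Tendsto (fun i => ε i * u i) l (𝓝 α)) : Tendsto u l atTop := by
  refine (hu.pos_mul_atTop hα (tendsto_inv_nhdsGT_zero.comp hε)).congr' ?_
  filter_upwards [eventually_mem_of_tendsto_nhdsWithin hε] with i (hi : 0 < ε i)
  simp only [Function.comp_apply]
  field_simp

lemma eventually_betaFn_pos (hα : 0 < α) (hβ : 0 < β) (hε : Tendsto ε l (𝓝[>] 0))
    (hu : Tendsto (fun i => ε i * u i) l (𝓝 α)) (hv : Tendsto (fun i => ε i * v i) l (𝓝 β)) :
    ∀ᶠ i in l, 0 < betaFn (u i) (v i) :=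
  (((tendsto_atTop_of_tendsto_mul hα hε hu).eventually_ge_atTop 2).and
    ((tendsto_atTop_of_tendsto_mul hβ hε hv).eventually_gt_atTop 1)).mono
    fun i h => by
      simpa only [sub_add_cancel] using betaFn_add_one_pos (u := u i - 1) (v := v i - 1)
        (by linarith [h.1]) (by linarith [h.2])

lemma tendsto_rpow_mul_of_tendsto_mul_log {x c : ι → ℝ} {L c₀ : ℝ} (hx : ∀ᶠ i in l, 0 < x i)
    (hL : Tendsto (fun i => ε i * log (x i)) l (𝓝 L)) (hc : Tendsto c l (𝓝 c₀)) :
    Tendsto (fun i => x i ^ (c i * ε i)) l (𝓝 (exp (c₀ * L))) := by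
  refine ((continuous_exp.tendsto _).comp (hc.mul hL)).congr' ?_
  filter_upwards [hx] with i hxi
  rw [Function.comp_apply, rpow_def_of_pos hxi]
  ring_nf

lemma tendsto_mul_log_of_tendsto_mul {w : ι → ℝ} {c : ℝ} (hc : 0 < c)
    (hε : Tendsto ε l (𝓝[>] 0)) (hw : Tendsto (fun i => ε i * w i) l (𝓝 c)) :
    Tendsto (fun i => ε i * log (w i)) l (𝓝 0) := by
  have hε₀ : Tendsto ε l (𝓝 0) := tendsto_nhds_of_tendsto_nhdsWithin hε
  have hlim := (hε₀.mul (hw.log hc.ne')).sub ((continuous_mul_log.tendsto 0).comp hε₀)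
  simp only [zero_mul, sub_zero] at hlim
  refine hlim.congr' ?_
  filter_upwards [eventually_mem_of_tendsto_nhdsWithin hε, hw.eventually_const_lt hc]
    with i (hεi : 0 < ε i) hwi
  have : 0 < w i := pos_of_mul_pos_right hwi hεi.le
  simp only [Function.comp_apply]
  rw [← mul_sub, log_mul hεi.ne' this.ne']
  ring

theorem tendsto_mul_log_betaFn (hα : 0 < α) (hβ : 0 < β) (hε : Tendsto ε l (𝓝[>] 0))
    (hu : Tendsto (fun i => ε i * u i) l (𝓝 α)) (hv : Tendsto (fun i => ε i * v i) l (𝓝 β)) :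
    Tendsto (fun i => ε i * log (betaFn (u i) (v i))) l (𝓝 (log (betaIntegrandMax α β))) := by
  have hε₀ : Tendsto ε l (𝓝 0) := tendsto_nhds_of_tendsto_nhdsWithin hε
  have hu' : Tendsto (fun i => ε i * (u i - 1)) l (𝓝 α) := by
    simpa only [mul_sub, mul_one, sub_zero] using hu.sub hε₀
  have hv' : Tendsto (fun i => ε i * (v i - 1)) l (𝓝 β) := by
    simpa only [mul_sub, mul_one, sub_zero] using hv.sub hε₀
  have hM : Tendsto (fun i => log (betaIntegrandMax (ε i * (u i - 1)) (ε i * (v i - 1)))) l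
      (𝓝 (log (betaIntegrandMax α β))) := by
    have hs := hu'.add hv'
    refine (((hu'.div hs (by positivity)).rpow hu' (Or.inl (by positivity))).mul
      ((hv'.div hs (by positivity)).rpow hv' (Or.inl (by positivity)))).log ?_
    exact (betaIntegrandMax_pos hα hβ).ne'
  have hlog_err : Tendsto (fun i => ε i * log (4 * ((u i - 1) + (v i - 1)))) l (𝓝 0) :=
    tendsto_mul_log_of_tendsto_mul (by positivity : 0 < 4 * (α + β)) hε (by
      simpa only [mul_add, mul_left_comm] using (hu'.add hv').const_mul 4)
  have hlarge : ∀ᶠ i in l, 0 < ε i ∧ 2 ≤ u i ∧ 2 ≤ v i :=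
    (eventually_mem_of_tendsto_nhdsWithin hε).and
      (((tendsto_atTop_of_tendsto_mul hα hε hu).eventually_ge_atTop 2).and
        ((tendsto_atTop_of_tendsto_mul hβ hε hv).eventually_ge_atTop 2))
  refine tendsto_of_tendsto_of_tendsto_of_le_of_le' (by simpa using hM.sub hlog_err) hM ?_ ?_
  · filter_upwards [hlarge] with i ⟨hεi, hui, hvi⟩
    simpa only [sub_add_cancel] using log_betaIntegrandMax_sub_le_mul_log_betaFn_add_one hεi
      (u := u i - 1) (v := v i - 1) (by linarith) (by linarith)
  · filter_upwards [hlarge] with i ⟨hεi, hui, hvi⟩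
    simpa only [sub_add_cancel] using mul_log_betaFn_add_one_le hεi
      (u := u i - 1) (v := v i - 1) (by linarith) (by linarith)

end

lemma tendsto_sub_const_nhdsGT (p : ℝ) : Tendsto (fun q : ℝ => q - p) (𝓝[>] p) (𝓝[>] 0) := by
  have hq : ∀ᶠ q in 𝓝[>] p, p < q := self_mem_nhdsWithin
  refine tendsto_nhdsWithin_of_tendsto_nhds_of_eventually_within _ ?_ (hq.mono fun q => sub_pos.2)
  simpa using ((continuous_sub_right p).tendsto p).mono_left nhdsWithin_le_nhds

lemma tendsto_sub_mul_div_sub (p : ℝ) :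
    Tendsto (fun q => (q - p) * (p / (q - p))) (𝓝[>] p) (𝓝 p) := by
  refine tendsto_const_nhds.congr' ?_
  filter_upwards [self_mem_nhdsWithin] with q (hq : p < q)
  field_simp [(sub_pos.2 hq).ne']

noncomputable def perssonSamkoBetaTerm (p q : ℝ) : ℝ :=
  p / (q - p) * betaFn (p / (q - p)) (p * q / ((q / (q - 1)) * (q - p)))

section PerssonSamko

variable {p : ℝ}

lemma tendsto_sub_mul_mul_div_conj_mul_sub (hp : 1 ≤ p) :
    Tendsto (fun q => (q - p) * (p * q / ((q / (q - 1)) * (q - p)))) (𝓝[>] p)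
      (𝓝 (p * (p - 1))) := by
  have hid : Tendsto (fun q : ℝ => q) (𝓝[>] p) (𝓝 p) := tendsto_id.mono_right nhdsWithin_le_nhds
  refine ((hid.sub_const 1).const_mul p).congr' ?_
  filter_upwards [self_mem_nhdsWithin] with q (hq : p < q)
  have : q - 1 ≠ 0 := by linarith
  field_simp [(sub_pos.2 hq).ne', (show q ≠ 0 by linarith)]

lemma eventually_perssonSamkoBetaTerm_pos (hp : 1 < p) :
    ∀ᶠ q in 𝓝[>] p, 0 < perssonSamkoBetaTerm p q := by
  filter_upwards [self_mem_nhdsWithin, eventually_betaFn_pos (by linarith) (by nlinarith)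
    (tendsto_sub_const_nhdsGT p) (tendsto_sub_mul_div_sub p)
    (tendsto_sub_mul_mul_div_conj_mul_sub hp.le)] with q (hq : p < q) hB
  exact mul_pos (div_pos (by linarith) (sub_pos.2 hq)) hB

lemma tendsto_sub_mul_log_perssonSamkoBetaTerm (hp : 1 < p) :
    Tendsto (fun q => (q - p) * log (perssonSamkoBetaTerm p q)) (𝓝[>] p)
      (𝓝 (log (betaIntegrandMax p (p * (p - 1))))) := by
  have hp₀ : 0 < p := by linarith
  have hε := tendsto_sub_const_nhdsGT p
  have hu := tendsto_sub_mul_div_sub p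
  have hv := tendsto_sub_mul_mul_div_conj_mul_sub hp.le
  have hlim := (tendsto_mul_log_of_tendsto_mul hp₀ hε hu).add
    (tendsto_mul_log_betaFn hp₀ (by nlinarith) hε hu hv)
  rw [zero_add] at hlim
  refine hlim.congr' ?_
  filter_upwards [self_mem_nhdsWithin, eventually_betaFn_pos hp₀ (by nlinarith) hε hu hv]
    with q (hq : p < q) hB
  rw [perssonSamkoBetaTerm, log_mul (div_pos hp₀ (sub_pos.2 hq)).ne' hB.ne', mul_add]

lemma persson_samko_limit_value (hp : 1 < p) :
    (p / (p - 1) / p) ^ (1 / p) * exp (-(1 / (p * p)) * log (betaIntegrandMax p (p * (p - 1))))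
      = p / (p - 1) := by
  have hp₀ : 0 < p := by linarith
  have hp₁ : 0 < p - 1 := by linarith
  rw [log_betaIntegrandMax hp₀ (by positivity)]
  have e₁ : p / (p - 1) / p = 1 / (p - 1) := by field_simp
  have e₂ : p / (p + p * (p - 1)) = 1 / p := by field_simp; ring
  have e₃ : p * (p - 1) / (p + p * (p - 1)) = (p - 1) / p := by field_simp; ring
  rw [e₁, e₂, e₃, rpow_def_of_pos (by positivity), ← exp_add,
    ← exp_log (by positivity : 0 < p / (p - 1)), log_div hp₀.ne' hp₁.ne',
    log_div hp₁.ne' hp₀.ne', log_div one_ne_zero hp₁.ne', log_div one_ne_zero hp₀.ne', log_one]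
  congr 1
  field_simp
  ring_nf

end PerssonSamko

/-- Persson–Samko limit: `(p'/q)^{1/q} ((p/(q-p)) B(p/(q-p), pq/(q'(q-p))))^{1/q-1/p}`
tends to `p/(p-1)` as `q → p⁺`. -/
theorem persson_samko_limit (p : ℝ) (hp : 1 < p) :
    Tendsto (fun q : ℝ =>
        ((p / (p - 1)) / q) ^ (1 / q) *
          ((p / (q - p)) *
            betaFn (p / (q - p)) (p * q / ((q / (q - 1)) * (q - p)))) ^ (1 / q - 1 / p))
      (𝓝[>] p) (𝓝 (p / (p - 1))) := by
  have hp₀ : 0 < p := by linarith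
  have hid : Tendsto (fun q : ℝ => q) (𝓝[>] p) (𝓝 p) := tendsto_id.mono_right nhdsWithin_le_nhds
  have hfirst : Tendsto (fun q : ℝ => ((p / (p - 1)) / q) ^ (1 / q)) (𝓝[>] p)
      (𝓝 ((p / (p - 1) / p) ^ (1 / p))) :=
    (tendsto_const_nhds.div hid hp₀.ne').rpow (tendsto_const_nhds.div hid hp₀.ne')
      (Or.inl (by positivity))
  have hexponent : Tendsto (fun q : ℝ => -(1 / (p * q))) (𝓝[>] p) (𝓝 (-(1 / (p * p)))) :=
    (tendsto_const_nhds.div (hid.const_mul p) (by positivity)).neg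
  have hlim := hfirst.mul <| tendsto_rpow_mul_of_tendsto_mul_log
    (eventually_perssonSamkoBetaTerm_pos hp) (tendsto_sub_mul_log_perssonSamkoBetaTerm hp)
    hexponent
  rw [persson_samko_limit_value hp] at hlim
  refine hlim.congr' ?_
  filter_upwards [self_mem_nhdsWithin] with q (hq : p < q)
  have : q ≠ 0 := by linarith
  rw [perssonSamkoBetaTerm]
  congr 2
  field_simp
  ring
end

section
/- Let n ≥ 1 and 1 < p < q < ∞. The function g(s) = (1 + s^{nq/p - n})^{-q/(q-p)} on (0,∞) is extremal for the radial Hardy-type inequality: (n∫₀^∞ (n∫₀^s g(r) r^{n-1} dr)^q s^{-nq/p'-1} ds)^{1/q} = A · (n∫₀^∞ g(s)^p s^{n-1} ds)^{1/p}, where A = (p'/q)^{1/q} ((p/(q-p)) · B(p/(q-p), pq/(q'(q-p))))^{1/q - 1/p}. -/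
open MeasureTheory Set
open scoped ENNReal

/-!
With `α = n(q/p - 1)` and `c = p/(q-p)` one has `αc = n`, and
`g(r) r^{n-1} = (1 + r^α)^{-c-1} r^{αc-1}` is the derivative of `r^{αc} (1 + r^α)^{-c} / (αc)`,
so the Hardy average of `g` is explicit.
Both sides then reduce to `∫₀^∞ s^{αx-1} (1 + s^α)^{-(x+y)} ds = B(x, y) / α`
(substitute `u = s^α`, then `u = t/(1-t)`), namely to `c B(c+1, y)` and `c B(c, y+1)` with
`y = q(p-1)/(q-p)`. The recurrence `y B(c+1, y) = c B(c, y+1)` and `c/y = p'/q` finish the proof.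
-/

open Real

theorem ofReal_betaFn (x y : ℝ) : (betaFn x y : ℂ) = Complex.betaIntegral x y := by
  rw [Complex.betaIntegral, intervalIntegral.integral_of_le zero_le_one,
    integral_Ioc_eq_integral_Ioo, betaFn, ← integral_complex_ofReal]
  refine setIntegral_congr_fun measurableSet_Ioo fun t ht => ?_
  push_cast [Complex.ofReal_cpow ht.1.le, Complex.ofReal_cpow (sub_nonneg.2 ht.2.le)]
  rfl

theorem betaFn_eq_Gamma {x y : ℝ} (hx : 0 < x) (hy : 0 < y) :
    betaFn x y = Gamma x * Gamma y / Gamma (x + y) := by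
  have h := Complex.Gamma_mul_Gamma_eq_betaIntegral (s := x) (t := y)
    (by simpa using hx) (by simpa using hy)
  rw [← ofReal_betaFn, ← Complex.ofReal_add, Complex.Gamma_ofReal, Complex.Gamma_ofReal,
    Complex.Gamma_ofReal] at h
  rw [eq_div_iff (Gamma_pos_of_pos (add_pos hx hy)).ne']
  exact_mod_cast (h.trans (mul_comm _ _)).symm

theorem betaFn_pos {x y : ℝ} (hx : 0 < x) (hy : 0 < y) : 0 < betaFn x y := by
  rw [betaFn_eq_Gamma hx hy]
  have := Gamma_pos_of_pos hx
  have := Gamma_pos_of_pos hy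
  have := Gamma_pos_of_pos (add_pos hx hy)
  positivity

theorem betaFn_recurrence {x y : ℝ} (hx : 0 < x) (hy : 0 < y) :
    x * betaFn x (y + 1) = y * betaFn (x + 1) y := by
  have h := Complex.betaIntegral_recurrence (u := x) (v := y)
    (by simpa using hx) (by simpa using hy)
  rw [← Complex.ofReal_one, ← Complex.ofReal_add, ← Complex.ofReal_add, ← ofReal_betaFn,
    ← ofReal_betaFn] at h
  exact_mod_cast h

theorem image_div_one_sub_Ioo : (fun t : ℝ => t / (1 - t)) '' Ioo 0 1 = Ioi 0 := by
  ext u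
  refine ⟨?_, fun (hu : 0 < u) => ⟨u / (1 + u), ⟨by positivity, ?_⟩, ?_⟩⟩
  · rintro ⟨t, ⟨ht0, ht1⟩, rfl⟩
    exact div_pos ht0 (sub_pos.2 ht1)
  · rw [div_lt_one (by positivity)]
    linarith
  · have : (1 : ℝ) + u ≠ 0 := by positivity
    field_simp
    ring

theorem integral_Ioi_rpow_mul_one_add_rpow_eq_betaFn (x y : ℝ) :
    ∫ u in Ioi (0 : ℝ), u ^ (x - 1) * (1 + u) ^ (-(x + y)) = betaFn x y := by
  have hderiv : ∀ t ∈ Ioo (0 : ℝ) 1,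
      HasDerivWithinAt (fun t : ℝ => t / (1 - t)) ((1 - t) ^ (-2 : ℝ)) (Ioo 0 1) t := by
    intro t ht
    have h1t : 1 - t ≠ 0 := (sub_pos.2 ht.2).ne'
    refine (((hasDerivAt_id t).div ((hasDerivAt_id t).const_sub 1) h1t).congr_deriv
      ?_).hasDerivWithinAt
    rw [rpow_neg (sub_pos.2 ht.2).le, rpow_two]
    field_simp
    simp [h1t]
  have hinj : InjOn (fun t : ℝ => t / (1 - t)) (Ioo 0 1) := by
    intro a ha b hb hab
    have := (sub_pos.2 ha.2).ne'
    have := (sub_pos.2 hb.2).ne'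
    field_simp at hab
    linarith
  rw [← image_div_one_sub_Ioo, integral_image_eq_integral_abs_deriv_smul measurableSet_Ioo
    hderiv hinj, betaFn]
  refine setIntegral_congr_fun measurableSet_Ioo fun t ht => ?_
  have h1t : 0 < 1 - t := sub_pos.2 ht.2
  have hplus : 1 + t / (1 - t) = (1 - t)⁻¹ := by field_simp; ring
  rw [smul_eq_mul, abs_of_pos (by positivity), hplus, div_eq_mul_inv,
    mul_rpow ht.1.le (by positivity), inv_rpow h1t.le, inv_rpow h1t.le, ← rpow_neg h1t.le,
    ← rpow_neg h1t.le, neg_neg]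
  calc (1 - t) ^ (-2 : ℝ) * (t ^ (x - 1) * (1 - t) ^ (-(x - 1)) * (1 - t) ^ (x + y))
      = t ^ (x - 1) * ((1 - t) ^ (-2 : ℝ) * (1 - t) ^ (-(x - 1)) * (1 - t) ^ (x + y)) := by ring
    _ = t ^ (x - 1) * (1 - t) ^ (y - 1) := by
      rw [← rpow_add h1t, ← rpow_add h1t]
      ring_nf

theorem integral_Ioi_rpow_mul_one_add_rpow_rpow_eq_betaFn {α : ℝ} (hα : 0 < α) (x y : ℝ) :
    ∫ s in Ioi (0 : ℝ), s ^ (α * x - 1) * (1 + s ^ α) ^ (-(x + y)) = α⁻¹ * betaFn x y := by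
  rw [← integral_Ioi_rpow_mul_one_add_rpow_eq_betaFn,
    ← integral_comp_rpow_Ioi_of_pos (g := fun u => u ^ (x - 1) * (1 + u) ^ (-(x + y))) hα,
    ← integral_const_mul]
  refine setIntegral_congr_fun measurableSet_Ioi fun s (hs : 0 < s) => ?_
  rw [smul_eq_mul, ← rpow_mul hs.le, ← mul_assoc, ← mul_assoc, inv_mul_cancel_left₀ hα.ne',
    ← rpow_add hs]
  ring_nf

theorem hasDerivAt_rpow_mul_one_add_rpow_rpow {α c r : ℝ} (hr : 0 < r) :
    HasDerivAt (fun r : ℝ => r ^ (α * c) * (1 + r ^ α) ^ (-c))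
      (α * c * ((1 + r ^ α) ^ (-c - 1) * r ^ (α * c - 1))) r := by
  have hA : 0 < 1 + r ^ α := by positivity
  have hpow := (hasDerivAt_rpow_const (p := α * c) (Or.inl hr.ne'))
  have hbase := ((hasDerivAt_rpow_const (p := α) (Or.inl hr.ne')).const_add 1).rpow_const
    (p := -c) (Or.inl hA.ne')
  refine (hpow.mul hbase).congr_deriv ?_
  have hsplit : (1 + r ^ α) ^ (-c) = (1 + r ^ α) ^ (-c - 1) * (1 + r ^ α) := by
    rw [← rpow_add_one hA.ne', sub_add_cancel]
  have hexp : r ^ (α * c) * r ^ (α - 1) = r ^ (α * c - 1) * r ^ α := by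
    rw [← rpow_add hr, ← rpow_add hr]
    ring_nf
  rw [hsplit]
  linear_combination (-(α * c) * (1 + r ^ α) ^ (-c - 1)) * hexp

theorem mul_integral_Ioo_one_add_rpow_rpow_mul_rpow {α c s : ℝ} (hα : 0 < α) (hc : 0 < c)
    (hs : 0 ≤ s) :
    α * c * ∫ r in Ioo 0 s, (1 + r ^ α) ^ (-c - 1) * r ^ (α * c - 1)
      = s ^ (α * c) * (1 + s ^ α) ^ (-c) := by
  have hcont : ContinuousOn (fun r : ℝ => r ^ (α * c) * (1 + r ^ α) ^ (-c)) (Icc 0 s) := by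
    refine ((continuous_rpow_const (by positivity)).continuousOn).mul
      (ContinuousOn.rpow_const ?_ fun r hr => Or.inl ?_)
    · exact continuousOn_const.add (continuous_rpow_const hα.le).continuousOn
    · have : 0 ≤ r := hr.1
      positivity
  have hderiv : ∀ r ∈ Ioo 0 s, HasDerivAt (fun r : ℝ => r ^ (α * c) * (1 + r ^ α) ^ (-c))
      (α * c * ((1 + r ^ α) ^ (-c - 1) * r ^ (α * c - 1))) r :=
    fun r hr => hasDerivAt_rpow_mul_one_add_rpow_rpow hr.1
  have hnonneg : ∀ r ∈ Ioo 0 s, 0 ≤ α * c * ((1 + r ^ α) ^ (-c - 1) * r ^ (α * c - 1)) := by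
    intro r hr
    have : 0 < r := hr.1
    positivity
  have hint := intervalIntegral.intervalIntegrable_deriv_of_nonneg (by rwa [uIcc_of_le hs])
    (by simpa [hs] using hderiv) (by simpa [hs] using hnonneg)
  rw [← integral_const_mul, ← integral_Ioc_eq_integral_Ioo, ← intervalIntegral.integral_of_le hs,
    intervalIntegral.integral_eq_sub_of_hasDerivAt_of_le hs hcont hderiv hint,
    zero_rpow (by positivity), zero_mul, sub_zero]

theorem integral_Ioi_one_add_rpow_rpow_rpow_mul_rpow {α : ℝ} (hα : 0 < α) (c p : ℝ) :
    ∫ s in Ioi (0 : ℝ), ((1 + s ^ α) ^ (-c - 1)) ^ p * s ^ (α * c - 1)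
      = α⁻¹ * betaFn c ((c + 1) * p - c) := by
  rw [← integral_Ioi_rpow_mul_one_add_rpow_rpow_eq_betaFn hα]
  refine setIntegral_congr_fun measurableSet_Ioi fun s (hs : 0 < s) => ?_
  rw [← rpow_mul (by positivity), mul_comm]
  ring_nf

theorem integral_Ioi_hardy_one_add_rpow_rpow_mul_rpow {α c : ℝ} (hα : 0 < α) (hc : 0 < c)
    (q : ℝ) :
    ∫ s in Ioi (0 : ℝ), (α * c * ∫ r in Ioo 0 s, (1 + r ^ α) ^ (-c - 1) * r ^ (α * c - 1)) ^ q *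
        s ^ (α * (c + 1) - α * c * q - 1)
      = α⁻¹ * betaFn (c + 1) (c * q - c - 1) := by
  rw [← integral_Ioi_rpow_mul_one_add_rpow_rpow_eq_betaFn hα]
  refine setIntegral_congr_fun measurableSet_Ioi fun s (hs : 0 < s) => ?_
  rw [mul_integral_Ioo_one_add_rpow_rpow_mul_rpow hα hc hs.le, mul_rpow (by positivity)
    (by positivity), ← rpow_mul hs.le, ← rpow_mul (by positivity), mul_right_comm,
    ← rpow_add hs]
  ring_nf

theorem betaFn_add_one_left {x y : ℝ} (hx : 0 < x) (hy : 0 < y) :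
    betaFn (x + 1) y = x / y * betaFn x (y + 1) := by
  rw [div_mul_eq_mul_div, betaFn_recurrence hx hy]
  field_simp

/-- The function `g(s) = (1 + s^{nq/p-n})^{-q/(q-p)}` is extremal for the radial
Hardy-type inequality with `β = n(1/p - 1/q)`. -/
theorem radial_extremal_identity (n : ℕ) (hn : 1 ≤ n) (p q : ℝ)
    (hp : 1 < p) (hpq : p < q)
    (g : ℝ → ℝ) (hg : ∀ s : ℝ, g s = (1 + s ^ ((n : ℝ) * q / p - n)) ^ (-(q / (q - p)))) :
    ((n : ℝ) * ∫ s in Ioi (0 : ℝ),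
        ((n : ℝ) * ∫ r in Ioo (0 : ℝ) s, g r * r ^ ((n : ℝ) - 1)) ^ q *
          s ^ (-(n : ℝ) * q * (1 - 1 / p) - 1)) ^ (1 / q)
      = (((p / (p - 1)) / q) ^ (1 / q) *
          ((p / (q - p)) *
            betaFn (p / (q - p)) (p * q / ((q / (q - 1)) * (q - p)))) ^ (1 / q - 1 / p)) *
        ((n : ℝ) * ∫ s in Ioi (0 : ℝ), g s ^ p * s ^ ((n : ℝ) - 1)) ^ (1 / p) := by
  have hn0 : (0 : ℝ) < n := by exact_mod_cast hn
  have hp1 : 0 < p - 1 := by linarith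
  have hqp : 0 < q - p := by linarith
  have hq0 : q ≠ 0 := by linarith
  have hq1 : q - 1 ≠ 0 := by linarith
  set α : ℝ := n * q / p - n with hα_def
  set c : ℝ := p / (q - p) with hc_def
  set y : ℝ := q * (p - 1) / (q - p) with hy_def
  have hα : 0 < α := by rw [hα_def, sub_pos, lt_div_iff₀ (by linarith)]; nlinarith
  have hc : 0 < c := div_pos (by linarith) hqp
  have hy : 0 < y := div_pos (mul_pos (by linarith) hp1) hqp
  have hαc : α * c = n := by rw [hα_def, hc_def]; field_simp
  have hgc : -(q / (q - p)) = -c - 1 := by rw [hc_def]; field_simp; ring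
  have hexp : -(n : ℝ) * q * (1 - 1 / p) - 1 = α * (c + 1) - α * c * q - 1 := by
    rw [← hαc, hc_def]; field_simp; ring
  have hy_left : c * q - c - 1 = y := by rw [hc_def, hy_def]; field_simp; ring
  have hy_right : (c + 1) * p - c = y + 1 := by rw [hc_def, hy_def]; field_simp; ring
  have hy_beta : p * q / ((q / (q - 1)) * (q - p)) = y + 1 := by
    rw [hy_def]; field_simp; ring
  have hcy : c / y = (p / (p - 1)) / q := by rw [hc_def, hy_def]; field_simp
  obtain rfl : g = fun s => (1 + s ^ α) ^ (-c - 1) := funext fun s => by rw [hg, hgc]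
  have hcancel : ∀ b, α * c * (α⁻¹ * b) = c * b := fun b => by field_simp
  beta_reduce
  rw [hexp, ← hαc, integral_Ioi_hardy_one_add_rpow_rpow_mul_rpow hα hc,
    integral_Ioi_one_add_rpow_rpow_rpow_mul_rpow hα, hcancel, hcancel, hy_left, hy_right,
    hy_beta, betaFn_add_one_left hc hy, hcy, mul_left_comm]
  have hR : 0 < c * betaFn c (y + 1) := mul_pos hc (betaFn_pos hc (by linarith))
  have hK : 0 < (p / (p - 1)) / q := div_pos (div_pos (by linarith) hp1) (by linarith)
  rw [mul_rpow hK.le hR.le, mul_assoc, ← rpow_add hR]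
  ring_nf
end
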